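/- Let Ȟ ∈ Ǎ and let x ∈ Hom_R(RΛ_S,ℝ) be a point with x ∈ Ȟ (viewing Hom_R(RΛ_S,ℝ) ⊆ Hom_ℤ(RΛ_S,ℝ)) and x ∈ T := ∪_{w∈W} w·C. Then there exists H ∈ A with x ∈ H. -/

import Mathlib

open scoped BigOperators

noncomputable section

/-- Data of a fusion ring structure on a ring `R`, with `ℤ`-basis indexed by `ι`. -/
structure FusionData (R : Type*) [Ring R] (ι : Type*) [Fintype ι] [DecidableEq ι] where
  /-- the distinguished basis -/
  b : Module.Basis ι ℤ R
  /-- the index of the unit -/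
  unit : ι
  b_unit : b unit = 1
  basis_mul_ne_zero : ∀ j k, b j * b k ≠ 0
  c_nonneg : ∀ j k i, 0 ≤ b.repr (b j * b k) i
  /-- the involution on the index set -/
  inv : ι → ι
  inv_invol : ∀ j, inv (inv j) = j
  /-- the `ℤ`-linear extension of the involution -/
  star : R →+ R
  star_basis : ∀ j, star (b j) = b (inv j)
  star_mul : ∀ x y, star (x * y) = star y * star x
  c_unit_iff : ∀ j k, b.repr (b j * b k) unit = 1 ↔ k = inv j

namespace FusionData

variable {R : Type*} [Ring R] {ι : Type*} [Fintype ι] [DecidableEq ι]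

/-- The structure constants of a fusion ring. -/
def c (F : FusionData R ι) (j k i : ι) : ℤ := F.b.repr (F.b j * F.b k) i

/-- Nonnegativity of an element of a fusion ring: all basis coefficients are nonnegative. -/
def nonneg (F : FusionData R ι) (r : R) : Prop := ∀ i, 0 ≤ F.b.repr r i

end FusionData

/-- The basis vector `α_s` of the free module `S → R`. -/
def simRoot (R : Type*) [Ring R] {S : Type*} [DecidableEq S] (s : S) : S → R :=
  Pi.single s 1

/-- A geometric realisation of the Coxeter system `(W, S)` over a fusion ring `R`,
together with a Frobenius–Perron dimension homomorphism. -/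
structure GeomSetting (R : Type*) [Ring R] (ι : Type*) [Fintype ι] [DecidableEq ι]
    (S : Type*) [Fintype S] [DecidableEq S] (W : Type*) [Group W] where
  /-- the fusion ring structure on `R` -/
  FD : FusionData R ι
  /-- the Coxeter matrix (`0` denotes `∞`) -/
  M : CoxeterMatrix S
  /-- the Coxeter system -/
  cs : CoxeterSystem M W
  /-- the Frobenius–Perron dimension -/
  FP : R →+* ℝ
  FP_basis : ∀ i, 1 ≤ FP (FD.b i)
  FP_star : ∀ r, FP (FD.star r) = FP r
  /-- the sesquilinear form on `RΛ_S = S → R` -/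
  B : (S → R) → (S → R) → R
  B_add_left : ∀ u u' v, B (u + u') v = B u v + B u' v
  B_add_right : ∀ u v v', B u (v + v') = B u v + B u v'
  B_sesq : ∀ (x y : R) (s t : S),
    B (x • simRoot R s) (y • simRoot R t)
      = y * B (simRoot R s) (simRoot R t) * FD.star x
  cartan_diag : ∀ s, B (simRoot R s) (simRoot R s) = 2
  cartan_nonneg : ∀ s t, s ≠ t →
    FD.nonneg (-(B (simRoot R s) (simRoot R t)))
  cartan_star : ∀ s t, s ≠ t →
    B (simRoot R t) (simRoot R s)
      = FD.star (B (simRoot R s) (simRoot R t))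
  cartan_fin : ∀ s t, s ≠ t → M s t ≠ 0 →
    FP (B (simRoot R s) (simRoot R t))
      = -2 * Real.cos (Real.pi / (M s t : ℝ))
  cartan_inf : ∀ s t, s ≠ t → M s t = 0 →
    FP (B (simRoot R s) (simRoot R t)) ≤ -2
  /-- the left `R`-linear action of `W` on `RΛ_S` -/
  rep : W →* ((S → R) ≃ₗ[R] (S → R))
  rep_simple : ∀ (s : S) (v : S → R),
    rep (cs.simple s) v = v - B (simRoot R s) v • simRoot R s

namespace GeomSetting

variable {R : Type*} [Ring R] {ι : Type*} [Fintype ι] [DecidableEq ι]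
  {S : Type*} [Fintype S] [DecidableEq S] {W : Type*} [Group W]

/-- The Cartan matrix `r_{s,t}` of the realisation. -/
def cartan (G : GeomSetting R ι S W) (s t : S) : R :=
  G.B (simRoot R s) (simRoot R t)

/-- The unfolded (integral) Cartan matrix `ř`. -/
def rcheck (G : GeomSetting R ι S W) (p q : ι × S) : ℤ :=
  if p.2 = q.2 then (if p.1 = q.1 then 2 else 0)
  else G.FD.b.repr (G.FD.b q.1 * G.cartan p.2 q.2) p.1

/-- The unfolded Coxeter matrix `m̌` (`0` denotes `∞`). -/
def mcheck (G : GeomSetting R ι S W) (p q : ι × S) : ℕ :=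
  if p = q then 1
  else if G.rcheck p q = 0 then 2
  else if G.rcheck p q = -1 then 3
  else 0

/-- The Coxeter relations of the unfolded Coxeter system. -/
def rels (G : GeomSetting R ι S W) : Set (FreeGroup (ι × S)) :=
  Set.range fun pq : (ι × S) × (ι × S) =>
    (FreeGroup.of pq.1 * FreeGroup.of pq.2) ^ G.mcheck pq.1 pq.2

/-- The unfolded Coxeter group `W̌`. -/
def Wcheck (G : GeomSetting R ι S W) : Type _ := PresentedGroup G.rels

instance (G : GeomSetting R ι S W) : Group G.Wcheck :=
  QuotientGroup.Quotient.group _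

/-- The generators `(b, s)` of the unfolded Coxeter group. -/
def gen (G : GeomSetting R ι S W) (p : ι × S) : G.Wcheck := PresentedGroup.of p

end GeomSetting


section Hyperplanes

variable {X : Type*} {G : Type*} [Group G]

/-- The closed fundamental cone in coordinates. -/
def coneC (X : Type*) : Set (X → ℝ) := {Z | ∀ x, 0 ≤ Z x}

/-- The open fundamental cone in coordinates. -/
def coneCo (X : Type*) : Set (X → ℝ) := {Z | ∀ x, 0 < Z x}

/-- The coordinate hyperplane (wall) at `x`. -/
def wallH (X : Type*) (x : X) : Set (X → ℝ) := {Z | Z x = 0}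

/-- The Tits cone of an action given in coordinates on the dual space. -/
def titsT (rho : G →* ((X → ℝ) ≃ₗ[ℝ] (X → ℝ))) : Set (X → ℝ) :=
  ⋃ g : G, rho g '' coneC X

/-- The hyperplane system of an action. -/
def hypSys (rho : G →* ((X → ℝ) ≃ₗ[ℝ] (X → ℝ))) : Set (Set (X → ℝ)) :=
  {H | ∃ (g : G) (x : X), H = rho g '' wallH X x}

/-- The complexified hyperplane complement. -/
def omegaReg (rho : G →* ((X → ℝ) ≃ₗ[ℝ] (X → ℝ))) : Set ((X → ℝ) × (X → ℝ)) :=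
  (interior (titsT rho) ×ˢ interior (titsT rho)) \ ⋃ H ∈ hypSys rho, H ×ˢ H

end Hyperplanes

/-- The embedding `Hom_R(RΛ_S, ℝ) → Hom_ℤ(RΛ_S, ℝ)` in coordinates:
`Z(α_s) ↦ (Z(b_i · α_s))_{(i,s)} = (FPdim(b_i) · Z(α_s))_{(i,s)}`. -/
def GeomSetting.emb {R : Type*} [Ring R] {ι : Type*} [Fintype ι] [DecidableEq ι]
    {S : Type*} [Fintype S] [DecidableEq S] {W : Type*} [Group W]
    (G : GeomSetting R ι S W) (Z : S → ℝ) : (ι × S) → ℝ :=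
  fun p => G.FP (G.FD.b p.1) * Z p.2

variable {R : Type*} [Ring R] {ι : Type*} [Fintype ι] [DecidableEq ι]
  {S : Type*} [Fintype S] [DecidableEq S] {W : Type*} [Group W]

/-!
Write `x = w • Z` with `Z` in the closed chamber. If some coordinate of `Z` vanishes, `x` lies on
the wall `w • H_{α_s}`. Otherwise `Z` is in the open chamber, and so is its image `Ž` in the
unfolded dual, because `FPdim b ≥ 1`. The embedding intertwines `s` with the product of the
pairwise commuting reflections `(b, s)`, so the image of `x` is `w̌ • Ž` for some `w̌ ∈ W̌`, and no
`W̌`-translate of a point of the open chamber lies on a wall (Tits): if `ℓ(w s_p) > ℓ(w)`, then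
`w(α_p)` is a nonnegative combination of simple roots, by induction on `ℓ(w)` after splitting off
a maximal alternating suffix in `s_p` and a right descent `s_t`, which leaves a rank-two
computation. The entries of `ř` are `0`, `-1` or `≤ -2`, so only the dihedral types
`m = 2, 3, ∞` occur, and the relations of `W̌`, acting through the reflections `(b, s)`, force
`m̌` to be symmetric, so that `(W̌, Š)` is a Coxeter system in the first place.
-/

namespace CoxeterMatrix

variable {X : Type*}

structure IsCartan (M : CoxeterMatrix X) (A : X → X → ℝ) : Prop where
  diag : ∀ p, A p p = 2
  off_diag : ∀ p q, p ≠ q → M p q = 2 ∨ M p q = 3 ∨ M p q = 0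
  of_eq_two : ∀ p q, M p q = 2 → A p q = 0
  of_eq_three : ∀ p q, M p q = 3 → A p q = -1
  of_eq_zero : ∀ p q, M p q = 0 → A p q ≤ -2

end CoxeterMatrix

section ReflectionFormula

variable {X Γ : Type*} [Group Γ] {rho : Γ →* ((X → ℝ) ≃ₗ[ℝ] (X → ℝ))} {A : X → X → ℝ}
  {s : X → Γ} (hs : ∀ p Z q, rho (s p) Z q = Z q - A p q * Z p)
include hs

theorem cartan_eq_zero_of_pow_two (hdiag : ∀ p, A p p = 2) {p q : X}
    (h : (s p * s q) ^ 2 = 1) (hpq : A p q = 0) : A q p = 0 := by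
  classical
  have hne : p ≠ q := by rintro rfl; linarith [hdiag p]
  have := congrArg (fun g => rho g (Pi.single q 1) p) h
  simp only [pow_succ, pow_zero, one_mul, map_mul, map_one, LinearEquiv.mul_apply,
    LinearEquiv.coe_one, id_eq, hs, hdiag, hpq, Pi.single_eq_same, Pi.single_eq_of_ne hne] at this
  linarith

theorem cartan_eq_neg_one_of_pow_three (hdiag : ∀ p, A p p = 2) {p q : X}
    (h : (s p * s q) ^ 3 = 1) (hpq : A p q = -1) : A q p = -1 := by
  classical
  have hne : p ≠ q := by rintro rfl; linarith [hdiag p]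
  have hp := congrArg (fun g => rho g (Pi.single p 1) p) h
  have hq := congrArg (fun g => rho g (Pi.single p 1) q) h
  simp only [pow_succ, pow_zero, one_mul, map_mul, map_one, LinearEquiv.mul_apply,
    LinearEquiv.coe_one, id_eq, hs, hdiag, hpq, Pi.single_eq_same, Pi.single_eq_of_ne hne.symm]
    at hp hq
  nlinarith

theorem apply_list_prod_of_pairwise {l : List X} (hl : l.Pairwise fun i j => A j i = 0)
    (Z : X → ℝ) (q : X) :
    rho (l.map s).prod Z q = Z q - (l.map fun i => A i q * Z i).sum := by
  induction l generalizing q with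
  | nil => simp
  | cons a l ih =>
    obtain ⟨ha, hl⟩ := List.pairwise_cons.mp hl
    have hfix : rho (l.map s).prod Z a = Z a := by
      rw [ih hl, List.sum_eq_zero, sub_zero]
      simp only [List.mem_map]
      rintro _ ⟨i, hi, rfl⟩
      rw [ha i hi, zero_mul]
    simp only [List.map_cons, List.prod_cons, map_mul, LinearEquiv.mul_apply, hs, hfix, ih hl,
      List.sum_cons]
    ring

end ReflectionFormula

namespace CoxeterSystem

variable {X W' : Type*} [Group W'] {M : CoxeterMatrix X} (cs : CoxeterSystem M W')

theorem exists_eq_mul_wordProd_alternatingWord {w : W'} {t : X} (ht : cs.IsRightDescent w t)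
    (p : X) :
    ∃ v k, 0 < k ∧ w = v * cs.wordProd (alternatingWord p t k) ∧
      cs.length v + k = cs.length w ∧ ¬cs.IsRightDescent v p ∧ ¬cs.IsRightDescent v t := by
  classical
  let D : ℕ → Prop := fun j ↦ ∃ v, w = v * cs.wordProd (alternatingWord p t j) ∧
    cs.length v + j = cs.length w
  have hD1 : D 1 := ⟨w * cs.simple t, by simp [alternatingWord, wordProd],
    cs.isRightDescent_iff.mp ht⟩
  have hD_le : ∀ j, D j → j ≤ cs.length w := fun j ⟨_, _, hv⟩ ↦ by omega
  obtain ⟨k, hDk, hmax⟩ : ∃ k, D k ∧ ∀ j, k < j → ¬D j :=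
    ⟨_, Nat.findGreatest_spec (hD_le 1 hD1) hD1,
      fun j hj hDj ↦ Nat.findGreatest_is_greatest hj (hD_le j hDj) hDj⟩
  obtain ⟨k, rfl⟩ : ∃ k', k = k' + 1 :=
    Nat.exists_eq_add_one.mpr (Nat.pos_of_ne_zero fun h ↦ hmax 1 (by omega) hD1)
  obtain ⟨v, hw, hlen⟩ := hDk
  have hno_descent : ∀ c, (c = p ∨ c = t) → ¬cs.IsRightDescent v c := by
    intro c hc hdesc
    have hvc := cs.isRightDescent_iff.mp hdesc
    have hcases : c = (if Even (k + 1) then t else p) ∨ c = (if Even k then t else p) := by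
      by_cases hk : Even k <;> simp [hk, Nat.even_add_one] <;> tauto
    rcases hcases with hnext | hhead
    · -- `v * s_c` admits a longer alternating suffix, against the maximality of `k`
      refine hmax (k + 2) (by omega) ⟨v * cs.simple c, ?_, by omega⟩
      rw [alternatingWord_succ' p t (k + 1), ← hnext, wordProd_cons, mul_assoc,
        simple_mul_simple_cancel_left, hw]
    · -- `s_c` cancels the first letter of the suffix, so `w` would be too short
      have hw' : w = v * cs.simple c * cs.wordProd (alternatingWord p t k) := by
        rw [hw, alternatingWord_succ', ← hhead, wordProd_cons, mul_assoc]
      have hle := cs.length_mul_le (v * cs.simple c) (cs.wordProd (alternatingWord p t k))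
      have hsuffix := cs.length_wordProd_le (alternatingWord p t k)
      rw [← hw'] at hle
      rw [length_alternatingWord] at hsuffix
      omega
  exact ⟨v, k + 1, k.succ_pos, hw, hlen, hno_descent p (.inl rfl), hno_descent t (.inr rfl)⟩

variable {A : X → X → ℝ} {rho : W' →* ((X → ℝ) ≃ₗ[ℝ] (X → ℝ))}
  (hrho : ∀ p Z q, rho (cs.simple p) Z q = Z q - A p q * Z p)

theorem apply_wordProd_cons_inv (i : X) (ω : List X) (Z : X → ℝ) :
    rho (cs.wordProd (i :: ω))⁻¹ Z = rho (cs.wordProd ω)⁻¹ (rho (cs.simple i) Z) := by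
  rw [wordProd_cons, mul_inv_rev, inv_simple, map_mul, LinearEquiv.mul_apply]

include hrho in
theorem exists_coeffs_alternatingWord_of_le_neg_two (hdiag : ∀ p, A p p = 2) {p t : X}
    (hpt : A p t ≤ -2) (htp : A t p ≤ -2) (k : ℕ) :
    ∃ c d : ℝ, 0 ≤ c ∧ 0 ≤ d ∧ 0 < c + d ∧ (if Even k then d ≤ c else c ≤ d) ∧
      ∀ Z, rho (cs.wordProd (alternatingWord p t k))⁻¹ Z p = c * Z p + d * Z t := by
  -- prepending `t` turns `d` into `-A t p * c - d ≥ 2 * c - d ≥ c`, and symmetrically for `p`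
  induction k with
  | zero =>
    exact ⟨1, 0, zero_le_one, le_rfl, by norm_num, by simp, fun Z ↦ by simp [alternatingWord]⟩
  | succ k ih =>
    obtain ⟨c, d, hc, hd, hcd, hcomp, hZ⟩ := ih
    by_cases hk : Even k
    · rw [if_pos hk] at hcomp
      refine ⟨c, -A t p * c - d, hc, by nlinarith, by nlinarith, ?_, fun Z ↦ ?_⟩
      · simp only [Nat.even_add_one, hk, not_true, if_false]
        nlinarith
      · rw [alternatingWord_succ', if_pos hk, cs.apply_wordProd_cons_inv, hZ, hrho, hrho, hdiag]
        ring
    · rw [if_neg hk] at hcomp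
      refine ⟨-A p t * d - c, d, by nlinarith, hd, by nlinarith, ?_, fun Z ↦ ?_⟩
      · simp only [Nat.even_add_one, hk, not_false_eq_true, if_true]
        nlinarith
      · rw [alternatingWord_succ', if_neg hk, cs.apply_wordProd_cons_inv, hZ, hrho, hrho, hdiag]
        ring

include hrho in
theorem exists_coeffs_of_isReduced_alternatingWord (hA : M.IsCartan A) {p t : X} (hpt : p ≠ t)
    {k : ℕ} (hred : cs.IsReduced (alternatingWord t p (k + 1))) :
    ∃ c d : ℝ, 0 ≤ c ∧ 0 ≤ d ∧ 0 < c + d ∧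
      ∀ Z, rho (cs.wordProd (alternatingWord p t k))⁻¹ Z p = c * Z p + d * Z t := by
  have hk : M t p ≠ 0 → k + 1 ≤ M t p := fun h0 ↦
    not_lt.mp fun hlt ↦ cs.not_isReduced_alternatingWord t p h0 hlt hred
  rcases hA.off_diag t p hpt.symm with h2 | h3 | h0
  · have hAtp := hA.of_eq_two t p h2
    obtain rfl | rfl : k = 0 ∨ k = 1 := by have := hk (by omega); omega
    all_goals refine ⟨1, 0, zero_le_one, le_rfl, by norm_num, fun Z ↦ ?_⟩
    all_goals simp [alternatingWord, wordProd, hrho, hAtp]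
  · have hAtp := hA.of_eq_three t p h3
    have hApt := hA.of_eq_three p t (M.symmetric p t ▸ h3)
    obtain rfl | rfl | rfl : k = 0 ∨ k = 1 ∨ k = 2 := by have := hk (by omega); omega
    · exact ⟨1, 0, zero_le_one, le_rfl, by norm_num, fun Z ↦ by simp [alternatingWord]⟩
    · exact ⟨1, 1, zero_le_one, zero_le_one, by norm_num, fun Z ↦ by
        simp [alternatingWord, wordProd, hrho, hAtp]⟩
    · exact ⟨0, 1, le_rfl, zero_le_one, by norm_num, fun Z ↦ by
        simp [alternatingWord, wordProd, hrho, hAtp, hApt, hA.diag]; ring⟩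
  · obtain ⟨c, d, hc, hd, hcd, -, hZ⟩ := cs.exists_coeffs_alternatingWord_of_le_neg_two hrho
      hA.diag (hA.of_eq_zero p t (M.symmetric p t ▸ h0)) (hA.of_eq_zero t p h0) k
    exact ⟨c, d, hc, hd, hcd, hZ⟩

include hrho in
theorem apply_inv_pos_of_not_isRightDescent (hA : M.IsCartan A) {Z : X → ℝ}
    (hZ : ∀ q, 0 < Z q) (w : W') (p : X) (hwp : ¬cs.IsRightDescent w p) :
    0 < rho w⁻¹ Z p := by
  induction hn : cs.length w using Nat.strong_induction_on generalizing w p with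
  | _ n ih =>
    rcases eq_or_ne w 1 with rfl | hw1
    · simpa using hZ p
    obtain ⟨t, ht⟩ := cs.exists_rightDescent_of_ne_one hw1
    have hpt : p ≠ t := by rintro rfl; exact hwp ht
    obtain ⟨v, k, hk, rfl, hlen, hvp, hvt⟩ := cs.exists_eq_mul_wordProd_alternatingWord ht p
    set u := cs.wordProd (alternatingWord p t k)
    have hred : cs.IsReduced (alternatingWord t p (k + 1)) := by
      have hconcat : cs.wordProd (alternatingWord t p (k + 1)) = u * cs.simple p := by
        rw [alternatingWord_succ, wordProd_concat]
      have hup := cs.length_wordProd_le (alternatingWord t p (k + 1))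
      have hlow := cs.length_mul_le v (u * cs.simple p)
      rw [← mul_assoc, cs.not_isRightDescent_iff.mp hwp] at hlow
      rw [hconcat, length_alternatingWord] at hup
      rw [IsReduced, hconcat, length_alternatingWord]
      omega
    obtain ⟨c, d, hc, hd, hcd, hcomb⟩ :=
      cs.exists_coeffs_of_isReduced_alternatingWord hrho hA hpt hred
    have hvp_pos := ih _ (by omega) v p hvp rfl
    have hvt_pos := ih _ (by omega) v t hvt rfl
    rw [mul_inv_rev, map_mul, LinearEquiv.mul_apply, hcomb]
    rcases hc.lt_or_eq with hc | rfl
    · exact add_pos_of_pos_of_nonneg (mul_pos hc hvp_pos) (mul_nonneg hd hvt_pos.le)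
    · simpa using mul_pos (by simpa using hcd) hvt_pos

include hrho in
theorem apply_ne_zero_of_pos (hA : M.IsCartan A) {Z : X → ℝ} (hZ : ∀ q, 0 < Z q) (w : W')
    (p : X) : rho w Z p ≠ 0 := by
  by_cases hwp : cs.IsRightDescent w⁻¹ p
  · have := cs.apply_inv_pos_of_not_isRightDescent hrho hA hZ _ p
      (cs.isRightDescent_iff_not_isRightDescent_mul.mp hwp)
    rw [mul_inv_rev, inv_inv, inv_simple, map_mul, LinearEquiv.mul_apply, hrho, hA.diag] at this
    linarith
  · simpa using (cs.apply_inv_pos_of_not_isRightDescent hrho hA hZ _ p hwp).ne'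

end CoxeterSystem

theorem FusionData.repr_basis_mul_nonneg (F : FusionData R ι) {x : R} (hx : F.nonneg x)
    (i j : ι) : 0 ≤ F.b.repr (F.b i * x) j := by
  rw [← F.b.sum_repr x, Finset.mul_sum]
  simp only [mul_smul_comm, map_sum, map_zsmul, Finset.sum_apply', Finsupp.smul_apply,
    smul_eq_mul]
  exact Finset.sum_nonneg fun k _ ↦ mul_nonneg (hx k) (F.c_nonneg i k j)

namespace GeomSetting

variable (G : GeomSetting R ι S W)

theorem rcheck_self (p : ι × S) : G.rcheck p p = 2 := by simp [rcheck]

theorem rcheck_of_snd_eq {p q : ι × S} (hne : p ≠ q) (h : p.2 = q.2) : G.rcheck p q = 0 := by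
  have h1 : p.1 ≠ q.1 := fun h1 ↦ hne (Prod.ext h1 h)
  simp [rcheck, h, h1]

theorem rcheck_nonpos {p q : ι × S} (hne : p ≠ q) : G.rcheck p q ≤ 0 := by
  by_cases h : p.2 = q.2
  · exact (G.rcheck_of_snd_eq hne h).le
  · have := G.FD.repr_basis_mul_nonneg (G.cartan_nonneg p.2 q.2 h) q.1 p.1
    rw [mul_neg, map_neg, Finsupp.neg_apply, neg_nonneg] at this
    simpa [rcheck, cartan, h] using this

theorem gen_mul_gen_pow (p q : ι × S) : (G.gen p * G.gen q) ^ G.mcheck p q = 1 := by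
  have := PresentedGroup.one_of_mem (rels := G.rels) ⟨(p, q), rfl⟩
  rwa [map_pow, map_mul] at this

theorem mcheck_comm (rhoF : G.Wcheck →* (((ι × S) → ℝ) ≃ₗ[ℝ] ((ι × S) → ℝ)))
    (hrhoF : ∀ (p : ι × S) (Z : (ι × S) → ℝ) (q : ι × S),
      rhoF (G.gen p) Z q = Z q - (G.rcheck p q : ℝ) * Z p)
    (p q : ι × S) : G.mcheck p q = G.mcheck q p := by
  have hdiag (p : ι × S) : (G.rcheck p p : ℝ) = 2 := by simp [rcheck_self]
  have hzero (p q : ι × S) (h : G.rcheck p q = 0) : G.rcheck q p = 0 := by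
    have hne : p ≠ q := by rintro rfl; simp [rcheck_self] at h
    have hm : G.mcheck p q = 2 := by simp [mcheck, hne, h]
    exact_mod_cast cartan_eq_zero_of_pow_two hrhoF hdiag (hm ▸ G.gen_mul_gen_pow p q)
      (by exact_mod_cast h)
  have hneg (p q : ι × S) (h : G.rcheck p q = -1) : G.rcheck q p = -1 := by
    have hne : p ≠ q := by rintro rfl; simp [rcheck_self] at h
    have hm : G.mcheck p q = 3 := by simp [mcheck, hne, h]
    exact_mod_cast cartan_eq_neg_one_of_pow_three hrhoF hdiag (hm ▸ G.gen_mul_gen_pow p q)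
      (by exact_mod_cast h)
  have h0 : G.rcheck p q = 0 ↔ G.rcheck q p = 0 := ⟨hzero p q, hzero q p⟩
  have h1 : G.rcheck p q = -1 ↔ G.rcheck q p = -1 := ⟨hneg p q, hneg q p⟩
  simp only [mcheck, eq_comm (a := q), h0, h1]

theorem mcheck_ne_one {p q : ι × S} (hne : p ≠ q) : G.mcheck p q ≠ 1 := by
  unfold mcheck
  split_ifs <;> simp_all

def unfoldedCoxeterMatrix (hsymm : ∀ p q, G.mcheck p q = G.mcheck q p) :
    CoxeterMatrix (ι × S) where
  M := G.mcheck
  isSymm := by ext p q; exact hsymm q p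
  diagonal p := by simp [mcheck]
  off_diagonal _ _ := G.mcheck_ne_one

def unfoldedCoxeterSystem (hsymm : ∀ p q, G.mcheck p q = G.mcheck q p) :
    CoxeterSystem (G.unfoldedCoxeterMatrix hsymm) G.Wcheck :=
  ⟨MulEquiv.refl _⟩

theorem isCartan_rcheck (hsymm : ∀ p q, G.mcheck p q = G.mcheck q p) :
    (G.unfoldedCoxeterMatrix hsymm).IsCartan fun p q ↦ (G.rcheck p q : ℝ) where
  diag p := by simp [rcheck_self]
  off_diag p q hne := by
    change G.mcheck p q = 2 ∨ G.mcheck p q = 3 ∨ G.mcheck p q = 0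
    unfold mcheck
    split_ifs <;> simp_all
  of_eq_two p q h := by
    change G.mcheck p q = 2 at h
    unfold mcheck at h
    split_ifs at h <;> simp_all
  of_eq_three p q h := by
    change G.mcheck p q = 3 at h
    unfold mcheck at h
    split_ifs at h <;> simp_all
  of_eq_zero p q h := by
    change G.mcheck p q = 0 at h
    unfold mcheck at h
    split_ifs at h with h1 h2 h3
    have := G.rcheck_nonpos h1
    exact_mod_cast (by omega : G.rcheck p q ≤ -2)

theorem sum_rcheck_mul_FP (s t : S) (j : ι) :
    ∑ i, (G.rcheck (i, s) (j, t) : ℝ) * G.FP (G.FD.b i) =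
      G.FP (G.FD.b j) * G.FP (G.cartan s t) := by
  by_cases hst : s = t
  · subst hst
    simp [rcheck, cartan, G.cartan_diag, mul_comm, map_ofNat]
  · rw [← map_mul]
    conv_rhs => rw [← G.FD.b.sum_repr (G.FD.b j * G.cartan s t)]
    simp [rcheck, hst, map_sum, zsmul_eq_mul]

variable {G} (rhoE : W →* ((S → ℝ) ≃ₗ[ℝ] (S → ℝ)))
  (hrhoE : ∀ (s : S) (Z : S → ℝ) (t : S),
    rhoE (G.cs.simple s) Z t = Z t - G.FP (G.cartan s t) * Z s)
  (rhoF : G.Wcheck →* (((ι × S) → ℝ) ≃ₗ[ℝ] ((ι × S) → ℝ)))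
  (hrhoF : ∀ (p : ι × S) (Z : (ι × S) → ℝ) (q : ι × S),
    rhoF (G.gen p) Z q = Z q - (G.rcheck p q : ℝ) * Z p)
include hrhoE hrhoF

theorem exists_emb_rhoE_simple (s : S) :
    ∃ g, ∀ Z, G.emb (rhoE (G.cs.simple s) Z) = rhoF g (G.emb Z) := by
  let l := (Finset.univ : Finset ι).toList.map fun i ↦ (i, s)
  have hl : l.Pairwise fun p q ↦ (G.rcheck q p : ℝ) = 0 :=
    List.pairwise_map.mpr <| (Finset.nodup_toList _).imp fun {i j} hij ↦ by
      exact_mod_cast G.rcheck_of_snd_eq (p := (j, s)) (q := (i, s))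
        (fun h ↦ hij (congrArg Prod.fst h).symm) rfl
  refine ⟨(l.map G.gen).prod, fun Z ↦ funext fun ⟨j, t⟩ ↦ ?_⟩
  rw [apply_list_prod_of_pairwise hrhoF hl, List.map_map]
  simp only [Function.comp_def, Finset.sum_map_toList, emb, hrhoE, ← mul_assoc, ← Finset.sum_mul,
    G.sum_rcheck_mul_FP]
  ring

theorem exists_emb_rhoE (w : W) : ∃ g, ∀ Z, G.emb (rhoE w Z) = rhoF g (G.emb Z) := by
  induction w using G.cs.simple_induction with
  | simple s => exact exists_emb_rhoE_simple rhoE hrhoE rhoF hrhoF s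
  | one => exact ⟨1, fun Z ↦ by rw [map_one, map_one]; rfl⟩
  | mul w w' hw hw' =>
    obtain ⟨g, hg⟩ := hw
    obtain ⟨g', hg'⟩ := hw'
    exact ⟨g * g', fun Z ↦ by simp only [map_mul, LinearEquiv.mul_apply, hg, hg']⟩

end GeomSetting

/-- **Lemma (points of `Ǎ`-hyperplanes in the Tits cone lie on `A`-hyperplanes).**
If `Ȟ ∈ Ǎ` and `x ∈ Hom_R(RΛ_S, ℝ)` satisfies `x ∈ Ȟ` and `x ∈ T`, then `x` lies on some
hyperplane `H ∈ A`. -/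
theorem point_on_unfolded_hyperplane (G : GeomSetting R ι S W)
    (rhoE : W →* ((S → ℝ) ≃ₗ[ℝ] (S → ℝ)))
    (hrhoE : ∀ (s : S) (Z : S → ℝ) (t : S),
      rhoE (G.cs.simple s) Z t = Z t - G.FP (G.cartan s t) * Z s)
    (rhoF : G.Wcheck →* (((ι × S) → ℝ) ≃ₗ[ℝ] ((ι × S) → ℝ)))
    (hrhoF : ∀ (p : ι × S) (Z : (ι × S) → ℝ) (q : ι × S),
      rhoF (G.gen p) Z q = Z q - (G.rcheck p q : ℝ) * Z p)
    (Hc : Set ((ι × S) → ℝ)) (hHc : Hc ∈ hypSys rhoF)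
    (x : S → ℝ) (hxH : G.emb x ∈ Hc) (hxT : x ∈ titsT rhoE) :
    ∃ H ∈ hypSys rhoE, x ∈ H := by
  obtain ⟨w, Z, hZ, rfl⟩ := Set.mem_iUnion.mp hxT
  by_cases hwall : ∃ t, Z t = 0
  · obtain ⟨t, ht⟩ := hwall
    exact ⟨_, ⟨w, t, rfl⟩, Z, ht, rfl⟩
  simp only [not_exists] at hwall
  obtain ⟨g, p, rfl⟩ := hHc
  obtain ⟨Y, hY, hYx⟩ := hxH
  obtain ⟨gw, hgw⟩ := GeomSetting.exists_emb_rhoE rhoE hrhoE rhoF hrhoF w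
  have hsymm := G.mcheck_comm rhoF hrhoF
  have hpos (q : ι × S) : 0 < G.emb Z q :=
    mul_pos (one_pos.trans_le (G.FP_basis q.1)) ((hZ q.2).lt_of_ne' (hwall q.2))
  refine absurd ?_ <| (G.unfoldedCoxeterSystem hsymm).apply_ne_zero_of_pos hrhoF
    (G.isCartan_rcheck hsymm) hpos (g⁻¹ * gw) p
  rw [map_mul, LinearEquiv.mul_apply, ← hgw, ← hYx, ← LinearEquiv.mul_apply, ← map_mul,
    inv_mul_cancel, map_one]
  exact hY
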